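/- arXiv:2604.07686 — 4 statements merged into one kernel-verified Lean document; each statement's English description precedes it below -/
import Mathlib

section
/- If ψ : ℝⁿ → ℝ is η-weakly convex and L-Lipschitz continuous, then for any 0 < μ₂ < μ₁ < 1/η and any z ∈ ℝⁿ, the Moreau envelopes satisfy ψ^{μ₁}(z) ≤ ψ^{μ₂}(z) ≤ ψ^{μ₁}(z) + (μ₁ − μ₂)L². -/
/-! Comparing the two envelopes pointwise in the candidate `v`: larger `μ` penalises distance
less, which gives the first inequality. For the second, move `v` to `w = z + (μ₂/μ₁)(v - z)`;
Lipschitz continuity costs at most `L (1 - μ₂/μ₁) ‖v - z‖` in `ψ`, and the remaining quadratic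
in `‖v - z‖` is bounded by completing the square. -/

open Filter Topology

noncomputable def moreauEnv {E : Type*} [NormedAddCommGroup E] (μ : ℝ) (ψ : E → ℝ)
    (w : E) : ℝ :=
  ⨅ v, (ψ v + (1 / (2 * μ)) * ‖v - w‖ ^ 2)

section MoreauEnvelope

variable {E : Type*} [NormedAddCommGroup E] {ψ : E → ℝ} {L μ μ₁ μ₂ : ℝ}

lemma sub_le_moreau_objective (hlip : ∀ x y, |ψ x - ψ y| ≤ L * ‖x - y‖) (hμ : 0 < μ)
    (z v : E) : ψ z - μ * L ^ 2 / 2 ≤ ψ v + 1 / (2 * μ) * ‖v - z‖ ^ 2 := by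
  have hψ : ψ z - ψ v ≤ L * ‖v - z‖ := norm_sub_rev z v ▸ (abs_le.mp (hlip z v)).2
  have hsq : 1 / (2 * μ) * ‖v - z‖ ^ 2 - L * ‖v - z‖ + μ * L ^ 2 / 2 =
      (‖v - z‖ - μ * L) ^ 2 / (2 * μ) := by
    field_simp
    ring
  linarith [div_nonneg (sq_nonneg (‖v - z‖ - μ * L)) (by positivity : (0 : ℝ) ≤ 2 * μ)]

lemma bddBelow_moreau_objective (hlip : ∀ x y, |ψ x - ψ y| ≤ L * ‖x - y‖) (hμ : 0 < μ)
    (z : E) : BddBelow (Set.range fun v => ψ v + 1 / (2 * μ) * ‖v - z‖ ^ 2) :=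
  ⟨ψ z - μ * L ^ 2 / 2, Set.forall_mem_range.mpr (sub_le_moreau_objective hlip hμ z)⟩

lemma moreauEnv_antitone (hlip : ∀ x y, |ψ x - ψ y| ≤ L * ‖x - y‖) (h0 : 0 < μ₂)
    (h21 : μ₂ ≤ μ₁) (z : E) : moreauEnv μ₁ ψ z ≤ moreauEnv μ₂ ψ z := by
  refine ciInf_mono (bddBelow_moreau_objective hlip (h0.trans_le h21) z) fun v => ?_
  have : 1 / (2 * μ₁) ≤ 1 / (2 * μ₂) := one_div_le_one_div_of_le (by linarith) (by linarith)
  gcongr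

variable [NormedSpace ℝ E]

lemma moreauEnv_le_moreau_objective_add (hlip : ∀ x y, |ψ x - ψ y| ≤ L * ‖x - y‖)
    (h0 : 0 < μ₂) (h21 : μ₂ ≤ μ₁) (z v : E) :
    moreauEnv μ₂ ψ z ≤ ψ v + 1 / (2 * μ₁) * ‖v - z‖ ^ 2 + (μ₁ - μ₂) * L ^ 2 := by
  have hμ₁ : 0 < μ₁ := h0.trans_le h21
  set t := μ₂ / μ₁
  set r := ‖v - z‖
  have ht0 : 0 ≤ t := by positivity
  have ht1 : t ≤ 1 := div_le_one_of_le₀ h21 hμ₁.le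
  set w := z + t • (v - z)
  have hwz : ‖w - z‖ = t * r := by
    rw [add_sub_cancel_left, norm_smul, Real.norm_of_nonneg ht0]
  have hwv : ‖w - v‖ = (1 - t) * r := by
    rw [show w - v = (1 - t) • (z - v) by module, norm_smul, Real.norm_of_nonneg (by linarith),
      norm_sub_rev]
  have hψw : ψ w ≤ ψ v + L * ((1 - t) * r) := by
    linarith [hwv ▸ (abs_le.mp (hlip w v)).2]
  have hquad : L * ((1 - t) * r) + 1 / (2 * μ₂) * (t * r) ^ 2 ≤
      1 / (2 * μ₁) * r ^ 2 + (μ₁ - μ₂) * L ^ 2 := by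
    have hslack : 1 / (2 * μ₁) * r ^ 2 + (μ₁ - μ₂) * L ^ 2 -
        (L * ((1 - t) * r) + 1 / (2 * μ₂) * (t * r) ^ 2) =
        (μ₁ - μ₂) * ((r - μ₁ * L) ^ 2 / (2 * μ₁ ^ 2) + L ^ 2 / 2) := by
      simp only [t]
      field_simp
      ring
    linarith [mul_nonneg (sub_nonneg.mpr h21)
      (by positivity : (0 : ℝ) ≤ (r - μ₁ * L) ^ 2 / (2 * μ₁ ^ 2) + L ^ 2 / 2)]
  calc moreauEnv μ₂ ψ z ≤ ψ w + 1 / (2 * μ₂) * ‖w - z‖ ^ 2 :=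
        ciInf_le (bddBelow_moreau_objective hlip h0 z) w
    _ ≤ ψ v + 1 / (2 * μ₁) * r ^ 2 + (μ₁ - μ₂) * L ^ 2 := by
        rw [hwz]
        linarith

lemma moreauEnv_le_moreauEnv_add (hlip : ∀ x y, |ψ x - ψ y| ≤ L * ‖x - y‖)
    (h0 : 0 < μ₂) (h21 : μ₂ ≤ μ₁) (z : E) :
    moreauEnv μ₂ ψ z ≤ moreauEnv μ₁ ψ z + (μ₁ - μ₂) * L ^ 2 := by
  rw [← sub_le_iff_le_add]
  exact le_ciInf fun v => sub_le_iff_le_add.mpr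
    (moreauEnv_le_moreau_objective_add hlip h0 h21 z v)

end MoreauEnvelope

theorem stmt1_general {n : ℕ} (ψ : EuclideanSpace ℝ (Fin n) → ℝ) (L μ₁ μ₂ : ℝ)
    (hlip : ∀ x y, |ψ x - ψ y| ≤ L * ‖x - y‖)
    (h0 : 0 < μ₂) (h21 : μ₂ < μ₁) (z : EuclideanSpace ℝ (Fin n)) :
    moreauEnv μ₁ ψ z ≤ moreauEnv μ₂ ψ z ∧
      moreauEnv μ₂ ψ z ≤ moreauEnv μ₁ ψ z + (μ₁ - μ₂) * L ^ 2 :=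
  ⟨moreauEnv_antitone hlip h0 h21.le z, moreauEnv_le_moreauEnv_add hlip h0 h21.le z⟩

theorem stmt1 {n : ℕ} (ψ : EuclideanSpace ℝ (Fin n) → ℝ) (η L μ₁ μ₂ : ℝ)
    (hη : 0 < η) (hL : 0 ≤ L)
    (hwc : ConvexOn ℝ Set.univ (fun x => ψ x + η / 2 * ‖x‖ ^ 2))
    (hlip : ∀ x y, |ψ x - ψ y| ≤ L * ‖x - y‖)
    (h0 : 0 < μ₂) (h21 : μ₂ < μ₁) (h1 : μ₁ < η⁻¹) (z : EuclideanSpace ℝ (Fin n)) :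
    moreauEnv μ₁ ψ z ≤ moreauEnv μ₂ ψ z ∧
      moreauEnv μ₂ ψ z ≤ moreauEnv μ₁ ψ z + (μ₁ - μ₂) * L ^ 2 :=
  stmt1_general ψ L μ₁ μ₂ hlip h0 h21 z
end

section
/- Let ψ : ℝⁿ → ℝ be convex and L_ψ-Lipschitz continuous, and let 𝓕 : ℝ^d → ℝⁿ be differentiable with L_{D𝓕}-Lipschitz continuous Fréchet derivative (in operator norm). Then the composition ψ ∘ 𝓕 is (L_ψ L_{D𝓕})-weakly convex, i.e., ψ ∘ 𝓕 + (L_ψ L_{D𝓕}/2)‖·‖² is convex. -/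
/-! The first-order Taylor remainder of `𝓕` is at most `(L_D / 2)‖y - x‖²`. Expanding `𝓕` at
`z = a • x + b • y` towards both `x` and `y`, the linear terms cancel, so `a • 𝓕 x + b • 𝓕 y` lies
within `(L_D / 2) a b ‖x - y‖²` of `𝓕 z`. Convexity and Lipschitz continuity of `ψ` then give
`ψ (𝓕 z) ≤ a ψ (𝓕 x) + b ψ (𝓕 y) + (L_ψ L_D / 2) a b ‖x - y‖²`, i.e. `ψ ∘ 𝓕` is strongly convex
with the negative modulus `-L_ψ L_D`, which in an inner product space is the claim. -/

open Set

section

variable {E F : Type*} [NormedAddCommGroup E] [NormedSpace ℝ E]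
  [NormedAddCommGroup F] [NormedSpace ℝ F]
  {f : E → F} {f' : E → E →L[ℝ] F} {L : ℝ}

theorem norm_sub_sub_fderiv_le_of_lipschitz (hf : ∀ x, HasFDerivAt f (f' x) x)
    (hf' : ∀ x y, ‖f' x - f' y‖ ≤ L * ‖x - y‖) (a b : E) :
    ‖f b - f a - f' a (b - a)‖ ≤ L / 2 * ‖b - a‖ ^ 2 := by
  set v := b - a
  let g : ℝ → F := fun t => f (a + t • v) - f a - t • f' a v
  have hg : ∀ t, HasDerivAt g (f' (a + t • v) v - f' a v) t := by
    intro t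
    have hline : HasDerivAt (fun t : ℝ => a + t • v) v t := by
      simpa using ((hasDerivAt_id t).smul_const v).const_add a
    have := (((hf _).comp_hasDerivAt t hline).sub_const (f a)).sub
      ((hasDerivAt_id t).smul_const (f' a v))
    rwa [one_smul] at this
  have hB : ∀ t : ℝ, HasDerivAt (fun t => L / 2 * t ^ 2 * ‖v‖ ^ 2) (L * t * ‖v‖ ^ 2) t := by
    intro t
    refine (((hasDerivAt_pow 2 t).const_mul (L / 2)).mul_const (‖v‖ ^ 2)).congr_deriv ?_
    push_cast
    ring
  have hbound : ∀ t ∈ Ico (0 : ℝ) 1, ‖f' (a + t • v) v - f' a v‖ ≤ L * t * ‖v‖ ^ 2 := by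
    intro t ht
    calc ‖f' (a + t • v) v - f' a v‖ = ‖(f' (a + t • v) - f' a) v‖ := rfl
      _ ≤ ‖f' (a + t • v) - f' a‖ * ‖v‖ := ContinuousLinearMap.le_opNorm _ _
      _ ≤ L * ‖t • v‖ * ‖v‖ := by
          gcongr
          simpa using hf' (a + t • v) a
      _ = L * t * ‖v‖ ^ 2 := by
          rw [norm_smul, Real.norm_of_nonneg ht.1]
          ring
  -- Fence `‖g t‖` on `[0, 1]` by `L / 2 * t ^ 2 * ‖v‖ ^ 2`, whose derivative dominates `‖g' t‖`.
  have key := image_norm_le_of_norm_deriv_right_le_deriv_boundary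
    (fun t _ => (hg t).continuousAt.continuousWithinAt) (fun t _ => (hg t).hasDerivWithinAt)
    (by simp [g]) hB hbound (right_mem_Icc.2 zero_le_one)
  simpa [g, v] using key

theorem norm_smul_add_smul_sub_apply_le_of_lipschitz (hf : ∀ x, HasFDerivAt f (f' x) x)
    (hf' : ∀ x y, ‖f' x - f' y‖ ≤ L * ‖x - y‖) {x y : E} {a b : ℝ} (ha : 0 ≤ a) (hb : 0 ≤ b)
    (hab : a + b = 1) :
    ‖a • f x + b • f y - f (a • x + b • y)‖ ≤ L / 2 * (a * b) * ‖x - y‖ ^ 2 := by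
  set z := a • x + b • y
  have hxz : x - z = b • (x - y) := by linear_combination (norm := module) -hab • x
  have hyz : y - z = a • (y - x) := by linear_combination (norm := module) -hab • y
  have hlin : a • f' z (x - z) + b • f' z (y - z) = 0 := by
    rw [← map_smul, ← map_smul, ← map_add, hxz, hyz, smul_smul, smul_smul, mul_comm b a,
      ← smul_add]
    simp
  have hsplit : a • f x + b • f y - f z =
      a • (f x - f z - f' z (x - z)) + b • (f y - f z - f' z (y - z)) := by
    linear_combination (norm := module) hlin + hab • f z
  calc ‖a • f x + b • f y - f z‖
      ≤ a * ‖f x - f z - f' z (x - z)‖ + b * ‖f y - f z - f' z (y - z)‖ := by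
        rw [hsplit]
        refine (norm_add_le _ _).trans_eq ?_
        rw [norm_smul_of_nonneg ha, norm_smul_of_nonneg hb]
    _ ≤ a * (L / 2 * ‖x - z‖ ^ 2) + b * (L / 2 * ‖y - z‖ ^ 2) := by
        gcongr <;> exact norm_sub_sub_fderiv_le_of_lipschitz hf hf' _ _
    _ = L / 2 * (a * b) * ‖x - y‖ ^ 2 := by
        rw [hxz, hyz, norm_smul_of_nonneg ha, norm_smul_of_nonneg hb, norm_sub_rev y x,
          eq_sub_of_add_eq hab]
        ring

theorem ConvexOn.strongConvexOn_comp_of_lipschitz_fderiv {ψ : F → ℝ} {Lψ : ℝ}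
    (hψ : ConvexOn ℝ univ ψ) (hψlip : ∀ u v, |ψ u - ψ v| ≤ Lψ * ‖u - v‖) (hLψ : 0 ≤ Lψ)
    (hf : ∀ x, HasFDerivAt f (f' x) x) (hf' : ∀ x y, ‖f' x - f' y‖ ≤ L * ‖x - y‖) :
    StrongConvexOn univ (-(Lψ * L)) (ψ ∘ f) := by
  refine ⟨convex_univ, fun x _ y _ a b ha hb hab => ?_⟩
  set w := a • f x + b • f y
  have hψw : ψ (f (a • x + b • y)) ≤ ψ w + Lψ * ‖w - f (a • x + b • y)‖ := by
    have := (abs_le.mp (hψlip (f (a • x + b • y)) w)).2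
    rw [norm_sub_rev] at this
    linarith
  have hψconv : ψ w ≤ a * ψ (f x) + b * ψ (f y) := hψ.2 trivial trivial ha hb hab
  have hdefect := mul_le_mul_of_nonneg_left
    (norm_smul_add_smul_sub_apply_le_of_lipschitz (x := x) (y := y) hf hf' ha hb hab) hLψ
  simp only [Function.comp_apply, smul_eq_mul]
  linarith

end

theorem stmt6_general {d n : ℕ} (ψ : EuclideanSpace ℝ (Fin n) → ℝ)
    (𝓕 : EuclideanSpace ℝ (Fin d) → EuclideanSpace ℝ (Fin n))
    (D : EuclideanSpace ℝ (Fin d) →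
      (EuclideanSpace ℝ (Fin d) →L[ℝ] EuclideanSpace ℝ (Fin n)))
    (Lψ LD : ℝ) (hLψ : 0 ≤ Lψ)
    (hconv : ConvexOn ℝ Set.univ ψ)
    (hlip : ∀ x y, |ψ x - ψ y| ≤ Lψ * ‖x - y‖)
    (hD : ∀ x, HasFDerivAt 𝓕 (D x) x)
    (hDlip : ∀ x y, ‖D x - D y‖ ≤ LD * ‖x - y‖) :
    ConvexOn ℝ Set.univ (fun x => ψ (𝓕 x) + Lψ * LD / 2 * ‖x‖ ^ 2) := by
  have h := strongConvexOn_iff_convex.mp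
    (hconv.strongConvexOn_comp_of_lipschitz_fderiv hlip hLψ hD hDlip)
  simpa only [Function.comp_apply, neg_div, neg_mul, sub_neg_eq_add] using h

theorem stmt6 {d n : ℕ} (ψ : EuclideanSpace ℝ (Fin n) → ℝ)
    (𝓕 : EuclideanSpace ℝ (Fin d) → EuclideanSpace ℝ (Fin n))
    (D : EuclideanSpace ℝ (Fin d) →
      (EuclideanSpace ℝ (Fin d) →L[ℝ] EuclideanSpace ℝ (Fin n)))
    (Lψ LD : ℝ) (hLψ : 0 ≤ Lψ) (hLD : 0 ≤ LD)
    (hconv : ConvexOn ℝ Set.univ ψ)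
    (hlip : ∀ x y, |ψ x - ψ y| ≤ Lψ * ‖x - y‖)
    (hD : ∀ x, HasFDerivAt 𝓕 (D x) x)
    (hDlip : ∀ x y, ‖D x - D y‖ ≤ LD * ‖x - y‖) :
    ConvexOn ℝ Set.univ (fun x => ψ (𝓕 x) + Lψ * LD / 2 * ‖x‖ ^ 2) :=
  stmt6_general ψ 𝓕 D Lψ LD hLψ hconv hlip hD hDlip
end

section
/- Let J : ℝ → ℝ be differentiable with L_{∇J}-Lipschitz derivative, L_J-Lipschitz, and affine on a closed set 𝒟 ⊂ ℝ with complement ℰ. Let 𝓕 : ℝ^d → ℝ be differentiable with L_{D𝓕}-Lipschitz derivative, and suppose ‖D𝓕(v)‖_op ≤ M for all v with 𝓕(v) ∈ ℰ. Then ∇(J ∘ 𝓕) is Lipschitz continuous with constant M²L_{∇J} + L_J L_{D𝓕}. -/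
/-!
Write `G x = J' (𝓕 x) • D x` for the gradient of `J ∘ 𝓕`. If `𝓕` maps a neighbourhood of `v` into
`𝒟`, then `J ∘ 𝓕 = u • 𝓕 + τ` near `v`, and comparing derivatives gives `G v = u • D v`; by
continuity of `D` this happens wherever `‖D v‖ > M`. When `‖D x‖` and `‖D y‖` both exceed `M`, this
turns `G x - G y` into `c • (D x - D y)` with `|c| ≤ L_J`.

Otherwise, say `‖D x‖ ≤ M`, and everything rests on `|J' (𝓕 x) - J' (𝓕 y)| ≤ L_{∇J} M ‖x - y‖`.
Along the segment from `y` to `x`, the function `t ↦ J' (𝓕 γ(t))` is locally constant where the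
directional derivative of `𝓕` exceeds `M ‖x - y‖`, and has local Lipschitz constant at most
`L_{∇J} M ‖x - y‖` elsewhere. A continuous function on an interval with a pointwise local
Lipschitz bound is globally Lipschitz with the same constant, even though it need not be
differentiable anywhere.
-/

open Filter Topology

theorem dist_le_mul_of_forall_eventually_dist_lt {E : Type*} [PseudoMetricSpace E]
    {φ : ℝ → E} {K a b : ℝ} (hφ : Continuous φ) (hab : a ≤ b)
    (h : ∀ x ∈ Set.Ico a b, ∀ r > K, ∀ᶠ z in 𝓝[>] x, dist (φ z) (φ x) < r * (z - x)) :
    dist (φ b) (φ a) ≤ K * (b - a) := by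
  refine image_le_of_liminf_slope_right_le_deriv_boundary (f := fun t => dist (φ t) (φ a))
    (B := fun t => K * (t - a)) (B' := fun _ => K) (hφ.dist continuous_const).continuousOn (by simp)
    (by fun_prop) (fun x _ => ?_) (fun x hx r hr => ?_) ⟨hab, le_rfl⟩
  · simpa using (((hasDerivAt_id x).sub_const a).const_mul K).hasDerivWithinAt
  · refine Eventually.frequently ?_
    filter_upwards [h x hx r hr, self_mem_nhdsWithin] with z hz hxz
    rw [slope_def_field, div_lt_iff₀ (sub_pos.2 hxz)]
    linarith [dist_triangle (φ z) (φ x) (φ a)]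

theorem dist_comp_le_of_eventually_const_of_lt_norm {E F : Type*} [PseudoMetricSpace E]
    [NormedAddCommGroup F] [NormedSpace ℝ F] {ψ : F → E} {g g' : ℝ → F} {K L a b : ℝ}
    (hK : 0 ≤ K) (hL : 0 ≤ L) (hψ : ∀ s t, dist (ψ s) (ψ t) ≤ K * dist s t)
    (hg : ∀ t, HasDerivAt g (g' t) t)
    (hconst : ∀ t, L < ‖g' t‖ → ∀ᶠ z in 𝓝 t, ψ (g z) = ψ (g t)) (hab : a ≤ b) :
    dist (ψ (g b)) (ψ (g a)) ≤ K * L * (b - a) := by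
  have hcont : Continuous (ψ ∘ g) := (LipschitzWith.of_dist_le' hψ).continuous.comp
    (continuous_iff_continuousAt.2 fun t => (hg t).continuousAt)
  refine dist_le_mul_of_forall_eventually_dist_lt hcont hab fun x _ r hr => ?_
  rcases lt_or_ge L ‖g' x‖ with hx | hx
  · filter_upwards [nhdsWithin_le_nhds (hconst x hx), self_mem_nhdsWithin] with z hz hxz
    rw [Function.comp_apply, Function.comp_apply, hz, dist_self]
    exact mul_pos ((mul_nonneg hK hL).trans_lt hr) (sub_pos.2 hxz)
  · have hKC : ∀ᶠ C in 𝓝 ‖g' x‖, K * C < r :=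
      ((continuous_const_mul K).tendsto _).eventually_lt_const
        ((mul_le_mul_of_nonneg_left hx hK).trans_lt hr)
    obtain ⟨C, hKC, hC⟩ := ((hKC.filter_mono nhdsWithin_le_nhds).and
      (self_mem_nhdsWithin : ∀ᶠ C in 𝓝[>] ‖g' x‖, ‖g' x‖ < C)).exists
    filter_upwards [(hg x).hasDerivWithinAt.limsup_norm_slope_le hC, self_mem_nhdsWithin]
      with z hz (hxz : x < z)
    have hzx : 0 < z - x := sub_pos.2 hxz
    rw [Real.norm_of_nonneg hzx.le, inv_mul_lt_iff₀ hzx] at hz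
    calc dist (ψ (g z)) (ψ (g x)) ≤ K * ‖g z - g x‖ := by rw [← dist_eq_norm]; exact hψ _ _
      _ ≤ K * ((z - x) * C) := mul_le_mul_of_nonneg_left hz.le hK
      _ = K * C * (z - x) := by ring
      _ < r * (z - x) := mul_lt_mul_of_pos_right hKC hzx

theorem norm_smul_sub_smul_le {F : Type*} [NormedAddCommGroup F] [NormedSpace ℝ F]
    (a b : ℝ) (A B : F) : ‖a • A - b • B‖ ≤ |a - b| * ‖A‖ + |b| * ‖A - B‖ := by
  calc ‖a • A - b • B‖ = ‖(a - b) • A + b • (A - B)‖ := by congr 1; module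
    _ ≤ |a - b| * ‖A‖ + |b| * ‖A - B‖ := by
      simpa only [norm_smul, Real.norm_eq_abs] using norm_add_le ((a - b) • A) (b • (A - B))

theorem smul_eq_smul_of_eventually_mem {E : Type*} [NormedAddCommGroup E] [NormedSpace ℝ E]
    {J : ℝ → ℝ} {𝓕 : E → ℝ} {D : E →L[ℝ] ℝ} {𝒟 : Set ℝ} {c u τ : ℝ} {v : E}
    (hJ : HasDerivAt J c (𝓕 v)) (hF : HasFDerivAt 𝓕 D v) (haff : ∀ z ∈ 𝒟, J z = u * z + τ)
    (hmem : ∀ᶠ w in 𝓝 v, 𝓕 w ∈ 𝒟) : c • D = u • D :=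
  (hJ.comp_hasFDerivAt v hF).unique <|
    ((hF.const_mul u).add_const τ).congr_of_eventuallyEq <| hmem.mono fun _ hw => haff _ hw

section

variable {E : Type*} [NormedAddCommGroup E] [NormedSpace ℝ E] {J J' : ℝ → ℝ} {𝒟 : Set ℝ}
  {𝓕 : E → ℝ} {D : E → E →L[ℝ] ℝ} {u τ LJ' LJ LD M : ℝ}

theorem smul_eq_smul_of_lt_norm (hJ' : ∀ t, HasDerivAt J (J' t) t)
    (haff : ∀ z ∈ 𝒟, J z = u * z + τ) (hF : ∀ x, HasFDerivAt 𝓕 (D x) x) (hD : Continuous D)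
    (hM : ∀ v, 𝓕 v ∈ 𝒟ᶜ → ‖D v‖ ≤ M) {v : E} (hv : M < ‖D v‖) :
    J' (𝓕 v) • D v = u • D v :=
  smul_eq_smul_of_eventually_mem (hJ' _) (hF v) haff <|
    ((hD.norm.tendsto v).eventually_const_lt hv).mono fun w hw =>
      not_not.1 fun hw𝒟 => (hM w hw𝒟).not_gt hw

theorem eventually_deriv_comp_eq_of_lt_norm (hJ' : ∀ t, HasDerivAt J (J' t) t)
    (haff : ∀ z ∈ 𝒟, J z = u * z + τ) (hF : ∀ x, HasFDerivAt 𝓕 (D x) x) (hD : Continuous D)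
    (hM : ∀ v, 𝓕 v ∈ 𝒟ᶜ → ‖D v‖ ≤ M) (hM₀ : 0 ≤ M) {v : E} (hv : M < ‖D v‖) :
    ∀ᶠ w in 𝓝 v, J' (𝓕 w) = u := by
  filter_upwards [(hD.norm.tendsto v).eventually_const_lt hv] with w hw
  exact smul_left_injective ℝ (norm_pos_iff.1 (hM₀.trans_lt hw))
    (smul_eq_smul_of_lt_norm hJ' haff hF hD hM hw)

theorem abs_deriv_comp_sub_le (hJ' : ∀ t, HasDerivAt J (J' t) t)
    (hJ'lip : ∀ s t, |J' s - J' t| ≤ LJ' * |s - t|) (haff : ∀ z ∈ 𝒟, J z = u * z + τ)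
    (hF : ∀ x, HasFDerivAt 𝓕 (D x) x) (hD : Continuous D) (hM : ∀ v, 𝓕 v ∈ 𝒟ᶜ → ‖D v‖ ≤ M)
    (hM₀ : 0 ≤ M) (x y : E) : |J' (𝓕 x) - J' (𝓕 y)| ≤ LJ' * M * ‖x - y‖ := by
  have hLJ' : 0 ≤ LJ' := by simpa using (abs_nonneg _).trans (hJ'lip 1 0)
  have hγ : Continuous (AffineMap.lineMap y x : ℝ → E) := AffineMap.lineMap_continuous
  have hconst : ∀ t : ℝ, M * ‖x - y‖ < ‖D (AffineMap.lineMap y x t) (x - y)‖ →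
      ∀ᶠ z in 𝓝 t, J' (𝓕 (AffineMap.lineMap y x z)) = J' (𝓕 (AffineMap.lineMap y x t)) := by
    intro t ht
    have hlt : M < ‖D (AffineMap.lineMap y x t)‖ :=
      lt_of_mul_lt_mul_right (ht.trans_le ((D _).le_opNorm _)) (norm_nonneg _)
    have hu := eventually_deriv_comp_eq_of_lt_norm hJ' haff hF hD hM hM₀ hlt
    filter_upwards [hγ.continuousAt.eventually hu] with z hz
    rw [hz, hu.self_of_nhds]
  simpa [Real.dist_eq, mul_assoc] using dist_comp_le_of_eventually_const_of_lt_norm hLJ'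
    (mul_nonneg hM₀ (norm_nonneg _)) (fun s t => by simpa [Real.dist_eq] using hJ'lip s t)
    (fun t => (hF _).comp_hasDerivAt t AffineMap.hasDerivAt_lineMap) hconst zero_le_one

theorem norm_smul_sub_smul_le_of_norm_le (hJ' : ∀ t, HasDerivAt J (J' t) t)
    (hJ'lip : ∀ s t, |J' s - J' t| ≤ LJ' * |s - t|) (hJ'bdd : ∀ t, |J' t| ≤ LJ)
    (haff : ∀ z ∈ 𝒟, J z = u * z + τ) (hF : ∀ x, HasFDerivAt 𝓕 (D x) x) (hD : Continuous D)
    (hDlip : ∀ x y, ‖D x - D y‖ ≤ LD * ‖x - y‖) (hM : ∀ v, 𝓕 v ∈ 𝒟ᶜ → ‖D v‖ ≤ M) {x : E}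
    (hx : ‖D x‖ ≤ M) (y : E) :
    ‖J' (𝓕 x) • D x - J' (𝓕 y) • D y‖ ≤ (M ^ 2 * LJ' + LJ * LD) * ‖x - y‖ := by
  have hcross := abs_deriv_comp_sub_le hJ' hJ'lip haff hF hD hM ((norm_nonneg _).trans hx) x y
  calc ‖J' (𝓕 x) • D x - J' (𝓕 y) • D y‖
      ≤ |J' (𝓕 x) - J' (𝓕 y)| * ‖D x‖ + |J' (𝓕 y)| * ‖D x - D y‖ := norm_smul_sub_smul_le ..
    _ ≤ LJ' * M * ‖x - y‖ * M + LJ * (LD * ‖x - y‖) :=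
      add_le_add (mul_le_mul hcross hx (norm_nonneg _) ((abs_nonneg _).trans hcross))
        (mul_le_mul (hJ'bdd _) (hDlip x y) (norm_nonneg _) ((abs_nonneg _).trans (hJ'bdd 0)))
    _ = (M ^ 2 * LJ' + LJ * LD) * ‖x - y‖ := by ring

theorem norm_smul_sub_smul_le_of_lt_norm (hJ' : ∀ t, HasDerivAt J (J' t) t)
    (hJ'bdd : ∀ t, |J' t| ≤ LJ) (haff : ∀ z ∈ 𝒟, J z = u * z + τ)
    (hF : ∀ x, HasFDerivAt 𝓕 (D x) x) (hD : Continuous D)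
    (hDlip : ∀ x y, ‖D x - D y‖ ≤ LD * ‖x - y‖) (hM : ∀ v, 𝓕 v ∈ 𝒟ᶜ → ‖D v‖ ≤ M) {x y : E}
    (hx : M < ‖D x‖) (hy : M < ‖D y‖) :
    ‖J' (𝓕 x) • D x - J' (𝓕 y) • D y‖ ≤ LJ * LD * ‖x - y‖ := by
  obtain ⟨c, hc, heq⟩ : ∃ c, |c| ≤ LJ ∧ J' (𝓕 x) • D x - J' (𝓕 y) • D y = c • (D x - D y) := by
    -- `|u| ≤ LJ` is only available through `u = J' (𝓕 x)`, which needs `D x ≠ 0`.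
    by_cases hDx : D x = 0
    · exact ⟨J' (𝓕 y), hJ'bdd _, by simp [hDx]⟩
    · have hxu : J' (𝓕 x) = u :=
        smul_left_injective ℝ hDx (smul_eq_smul_of_lt_norm hJ' haff hF hD hM hx)
      refine ⟨J' (𝓕 x), hJ'bdd _, ?_⟩
      rw [smul_eq_smul_of_lt_norm hJ' haff hF hD hM hy, hxu, smul_sub]
  rw [heq, norm_smul, Real.norm_eq_abs, mul_assoc]
  exact mul_le_mul hc (hDlip x y) (norm_nonneg _) ((abs_nonneg c).trans hc)

end

theorem stmt7_general {d : ℕ} (J J' : ℝ → ℝ) (𝒟 : Set ℝ)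
    (𝓕 : EuclideanSpace ℝ (Fin d) → ℝ)
    (D : EuclideanSpace ℝ (Fin d) → (EuclideanSpace ℝ (Fin d) →L[ℝ] ℝ))
    (LJ' LJ LD M : ℝ)
    (hJ' : ∀ t, HasDerivAt J (J' t) t)
    (hJ'lip : ∀ s t, |J' s - J' t| ≤ LJ' * |s - t|)
    (hJlip : ∀ s t, |J s - J t| ≤ LJ * |s - t|)
    (haff : ∃ u τ : ℝ, ∀ z ∈ 𝒟, J z = u * z + τ)
    (hF : ∀ x, HasFDerivAt 𝓕 (D x) x)
    (hDlip : ∀ x y, ‖D x - D y‖ ≤ LD * ‖x - y‖)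
    (hM : ∀ v, 𝓕 v ∈ 𝒟ᶜ → ‖D v‖ ≤ M) :
    ∀ x y, ‖J' (𝓕 x) • D x - J' (𝓕 y) • D y‖ ≤ (M ^ 2 * LJ' + LJ * LD) * ‖x - y‖ := by
  obtain ⟨u, τ, haff⟩ := haff
  have hD : Continuous D :=
    (LipschitzWith.of_dist_le' fun x y => by simpa [dist_eq_norm] using hDlip x y).continuous
  have hLJ : 0 ≤ LJ := by simpa using (abs_nonneg _).trans (hJlip 1 0)
  have hLJ' : 0 ≤ LJ' := by simpa using (abs_nonneg _).trans (hJ'lip 1 0)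
  have hJ'bdd : ∀ t, |J' t| ≤ LJ := fun t => by
    simpa using (hJ' t).le_of_lip' hLJ (.of_forall fun s => by simpa using hJlip s t)
  intro x y
  rcases le_or_gt ‖D x‖ M with hx | hx
  · exact norm_smul_sub_smul_le_of_norm_le hJ' hJ'lip hJ'bdd haff hF hD hDlip hM hx y
  rcases le_or_gt ‖D y‖ M with hy | hy
  · rw [norm_sub_rev, norm_sub_rev x]
    exact norm_smul_sub_smul_le_of_norm_le hJ' hJ'lip hJ'bdd haff hF hD hDlip hM hy x
  calc ‖J' (𝓕 x) • D x - J' (𝓕 y) • D y‖ ≤ LJ * LD * ‖x - y‖ :=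
        norm_smul_sub_smul_le_of_lt_norm hJ' hJ'bdd haff hF hD hDlip hM hx hy
    _ ≤ (M ^ 2 * LJ' + LJ * LD) * ‖x - y‖ := by
      gcongr
      exact le_add_of_nonneg_left (mul_nonneg (sq_nonneg M) hLJ')

theorem stmt7 {d : ℕ} (J J' : ℝ → ℝ) (𝒟 : Set ℝ)
    (𝓕 : EuclideanSpace ℝ (Fin d) → ℝ)
    (D : EuclideanSpace ℝ (Fin d) → (EuclideanSpace ℝ (Fin d) →L[ℝ] ℝ))
    (LJ' LJ LD M : ℝ)
    (hJ' : ∀ t, HasDerivAt J (J' t) t)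
    (hJ'lip : ∀ s t, |J' s - J' t| ≤ LJ' * |s - t|)
    (hJlip : ∀ s t, |J s - J t| ≤ LJ * |s - t|)
    (h𝒟 : IsClosed 𝒟)
    (haff : ∃ u τ : ℝ, ∀ z ∈ 𝒟, J z = u * z + τ)
    (hF : ∀ x, HasFDerivAt 𝓕 (D x) x)
    (hDlip : ∀ x y, ‖D x - D y‖ ≤ LD * ‖x - y‖)
    (hM : ∀ v, 𝓕 v ∈ 𝒟ᶜ → ‖D v‖ ≤ M) :
    ∀ x y, ‖J' (𝓕 x) • D x - J' (𝓕 y) • D y‖ ≤ (M ^ 2 * LJ' + LJ * LD) * ‖x - y‖ :=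
  stmt7_general J J' 𝒟 𝓕 D LJ' LJ LD M hJ' hJ'lip hJlip haff hF hDlip hM
end

section
/- Suppose a sequence of differentiable functions F_k : ℝ^d → ℝ and points x_k satisfy F_{k+1}(x_{k+1}) ≤ F_k(x_k) − c γ_k ‖∇F_k(x_k)‖² + (μ_k − μ_{k+1})L², where c > 0, L ≥ 0, γ_k ≥ δ̄ μ_k/(ϖ₁μ_k + ϖ₂) with δ̄, ϖ₁, ϖ₂ > 0, μ_k ∈ (0, (2η)⁻¹] is nonincreasing, and F_k(x_k) ≥ B − μ_k L² for a lower bound B ∈ ℝ. Then for any k̲ ≤ k̄, min_{k̲ ≤ k ≤ k̄} ‖∇F_k(x_k)‖ ≤ √( C / Σ_{k=k̲}^{k̄} μ_k ) where C := (ϖ₁ + 2ηϖ₂)(F₁(x₁) − B + μ₁L²)/(2ηcδ̄). -/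
/-!
With `Φ k = F k (x k) + μ k * L ^ 2` the decrease condition reads
`Φ (k + 1) + c γₖ ‖∇Fₖ‖² ≤ Φ k`, and `Φ k ≥ B`, so the descent terms over any window sum to at
most `Φ 1 - B`. Because `μ k ≤ (2η)⁻¹`, the stepsize bound gives
`μ k ≤ (ϖ₁ + 2ηϖ₂) / (2ηδ) * γ k`, hence `∑ μ k ‖∇Fₖ‖² ≤ C`; the smallest `‖∇Fₖ‖²` is at most
this `μ`-weighted average.
-/

theorem sum_Icc_le_of_descent {Φ w : ℕ → ℝ} {B : ℝ} {a l u : ℕ}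
    (hstep : ∀ k ≥ a, Φ (k + 1) + w k ≤ Φ k) (hw : ∀ k ≥ a, 0 ≤ w k)
    (hlb : ∀ k ≥ a, B ≤ Φ k) (hal : a ≤ l) :
    ∑ k ∈ Finset.Icc l u, w k ≤ Φ a - B := by
  set n := max a (u + 1)
  have hsub : Finset.Icc l u ⊆ Finset.Ico a n := fun k hk => by
    simp only [Finset.mem_Icc, Finset.mem_Ico] at hk ⊢; omega
  calc ∑ k ∈ Finset.Icc l u, w k
      ≤ ∑ k ∈ Finset.Ico a n, w k :=
        Finset.sum_le_sum_of_subset_of_nonneg hsub fun k hk _ => hw k (Finset.mem_Ico.mp hk).1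
    _ ≤ ∑ k ∈ Finset.Ico a n, ((-Φ) (k + 1) - (-Φ) k) := by
        refine Finset.sum_le_sum fun k hk => ?_
        have := hstep k (Finset.mem_Ico.mp hk).1
        simp only [Pi.neg_apply]; linarith
    _ = Φ a - Φ n := by
        rw [Finset.sum_Ico_sub _ (le_max_left a _)]; simp only [Pi.neg_apply]; ring
    _ ≤ Φ a - B := by linarith [hlb n (le_max_left a _)]

theorem le_mul_of_div_affine_le {μ γ δ ϖ₁ ϖ₂ η : ℝ} (hδ : 0 < δ) (hϖ₁ : 0 ≤ ϖ₁) (hϖ₂ : 0 < ϖ₂)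
    (hη : 0 < η) (hμ : 0 < μ) (hμη : μ ≤ (2 * η)⁻¹) (hγ : δ * μ / (ϖ₁ * μ + ϖ₂) ≤ γ) :
    μ ≤ (ϖ₁ + 2 * η * ϖ₂) / (2 * η * δ) * γ := by
  have hκ : 0 < ϖ₁ * μ + ϖ₂ := by positivity
  have h2ημ : 2 * η * μ ≤ 1 := by
    calc 2 * η * μ ≤ 2 * η * (2 * η)⁻¹ := by gcongr
      _ = 1 := mul_inv_cancel₀ (by positivity)
  have hγ0 : 0 ≤ γ := (by positivity : 0 ≤ δ * μ / (ϖ₁ * μ + ϖ₂)).trans hγ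
  rw [div_le_iff₀ hκ] at hγ
  rw [div_mul_eq_mul_div, le_div_iff₀ (by positivity)]
  -- 2ηδμ ≤ 2ηγ(ϖ₁μ + ϖ₂), and 2ημ ≤ 1 turns ϖ₁μ into at most ϖ₁ / (2η)
  nlinarith [mul_le_mul_of_nonneg_left hγ (by positivity : (0 : ℝ) ≤ 2 * η),
    mul_le_mul_of_nonneg_left (mul_le_mul_of_nonneg_left h2ημ hϖ₁) hγ0]

theorem Finset.inf'_le_sqrt_of_sum_mul_sq_le {ι : Type*} {s : Finset ι} (hs : s.Nonempty)
    {μ a : ι → ℝ} {C : ℝ} (hμ : ∀ k ∈ s, 0 < μ k) (hC : ∑ k ∈ s, μ k * a k ^ 2 ≤ C) :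
    s.inf' hs a ≤ Real.sqrt (C / ∑ k ∈ s, μ k) := by
  set m := s.inf' hs a
  rcases le_or_gt m 0 with hm | hm
  · exact hm.trans (Real.sqrt_nonneg _)
  refine Real.le_sqrt_of_sq_le ((le_div_iff₀ (Finset.sum_pos hμ hs)).2 (le_trans ?_ hC))
  rw [Finset.mul_sum]
  refine Finset.sum_le_sum fun k hk => ?_
  have hmk : m ^ 2 ≤ a k ^ 2 := pow_le_pow_left₀ hm.le (Finset.inf'_le a hk) 2
  nlinarith [hμ k hk]

theorem stmt15_general {d : ℕ} (F : ℕ → EuclideanSpace ℝ (Fin d) → ℝ)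
    (x : ℕ → EuclideanSpace ℝ (Fin d)) (gF : ℕ → EuclideanSpace ℝ (Fin d))
    (γ μ : ℕ → ℝ) (c L δ ϖ₁ ϖ₂ η B : ℝ)
    (hc : 0 < c) (hδ : 0 < δ) (hϖ₁ : 0 < ϖ₁) (hϖ₂ : 0 < ϖ₂) (hη : 0 < η)
    (hμpos : ∀ k ≥ 1, 0 < μ k) (hμub : ∀ k ≥ 1, μ k ≤ (2 * η)⁻¹)
    (hγ : ∀ k ≥ 1, γ k ≥ δ * μ k / (ϖ₁ * μ k + ϖ₂))
    (hdec : ∀ k ≥ 1,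
      F (k + 1) (x (k + 1)) ≤ F k (x k) - c * γ k * ‖gF k‖ ^ 2 + (μ k - μ (k + 1)) * L ^ 2)
    (hlb : ∀ k ≥ 1, F k (x k) ≥ B - μ k * L ^ 2)
    (kl ku : ℕ) (h1 : 1 ≤ kl) (hku : kl ≤ ku) :
    (Finset.Icc kl ku).inf' (Finset.nonempty_Icc.mpr hku) (fun k => ‖gF k‖) ≤
      Real.sqrt
        ((ϖ₁ + 2 * η * ϖ₂) * (F 1 (x 1) - B + μ 1 * L ^ 2) / (2 * η * c * δ) /
          ∑ k ∈ Finset.Icc kl ku, μ k) := by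
  set K := (ϖ₁ + 2 * η * ϖ₂) / (2 * η * δ) with hK
  have hγ0 : ∀ k ≥ 1, 0 ≤ γ k := fun k hk =>
    (by have := hμpos k hk; positivity : 0 ≤ δ * μ k / (ϖ₁ * μ k + ϖ₂)).trans (hγ k hk)
  have hdescent : ∑ k ∈ Finset.Icc kl ku, c * γ k * ‖gF k‖ ^ 2 ≤
      (F 1 (x 1) + μ 1 * L ^ 2) - B :=
    sum_Icc_le_of_descent (Φ := fun k => F k (x k) + μ k * L ^ 2)
      (fun k hk => by linarith [hdec k hk]) (fun k hk => by have := hγ0 k hk; positivity)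
      (fun k hk => by linarith [hlb k hk]) h1
  refine Finset.inf'_le_sqrt_of_sum_mul_sq_le _
    (fun k hk => hμpos k (h1.trans (Finset.mem_Icc.mp hk).1)) ?_
  calc ∑ k ∈ Finset.Icc kl ku, μ k * ‖gF k‖ ^ 2
      ≤ ∑ k ∈ Finset.Icc kl ku, K / c * (c * γ k * ‖gF k‖ ^ 2) := by
        refine Finset.sum_le_sum fun k hk => ?_
        have hk1 := h1.trans (Finset.mem_Icc.mp hk).1
        rw [show K / c * (c * γ k * ‖gF k‖ ^ 2) = K * γ k * ‖gF k‖ ^ 2 by field_simp]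
        gcongr
        exact le_mul_of_div_affine_le hδ hϖ₁.le hϖ₂ hη (hμpos k hk1) (hμub k hk1) (hγ k hk1)
    _ = K / c * ∑ k ∈ Finset.Icc kl ku, c * γ k * ‖gF k‖ ^ 2 := (Finset.mul_sum ..).symm
    _ ≤ K / c * ((F 1 (x 1) + μ 1 * L ^ 2) - B) := by gcongr
    _ = _ := by rw [hK]; field_simp; ring

theorem stmt15 {d : ℕ} (F : ℕ → EuclideanSpace ℝ (Fin d) → ℝ)
    (x : ℕ → EuclideanSpace ℝ (Fin d)) (gF : ℕ → EuclideanSpace ℝ (Fin d))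
    (γ μ : ℕ → ℝ) (c L δ ϖ₁ ϖ₂ η B : ℝ)
    (hc : 0 < c) (hL : 0 ≤ L) (hδ : 0 < δ) (hϖ₁ : 0 < ϖ₁) (hϖ₂ : 0 < ϖ₂) (hη : 0 < η)
    (hgrad : ∀ k ≥ 1, HasGradientAt (F k) (gF k) (x k))
    (hμpos : ∀ k ≥ 1, 0 < μ k) (hμub : ∀ k ≥ 1, μ k ≤ (2 * η)⁻¹)
    (hμmono : ∀ k ≥ 1, μ (k + 1) ≤ μ k)
    (hγ : ∀ k ≥ 1, γ k ≥ δ * μ k / (ϖ₁ * μ k + ϖ₂))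
    (hdec : ∀ k ≥ 1,
      F (k + 1) (x (k + 1)) ≤ F k (x k) - c * γ k * ‖gF k‖ ^ 2 + (μ k - μ (k + 1)) * L ^ 2)
    (hlb : ∀ k ≥ 1, F k (x k) ≥ B - μ k * L ^ 2)
    (kl ku : ℕ) (h1 : 1 ≤ kl) (hku : kl ≤ ku) :
    (Finset.Icc kl ku).inf' (Finset.nonempty_Icc.mpr hku) (fun k => ‖gF k‖) ≤
      Real.sqrt
        ((ϖ₁ + 2 * η * ϖ₂) * (F 1 (x 1) - B + μ 1 * L ^ 2) / (2 * η * c * δ) /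
          ∑ k ∈ Finset.Icc kl ku, μ k) :=
  stmt15_general F x gF γ μ c L δ ϖ₁ ϖ₂ η B hc hδ hϖ₁ hϖ₂ hη hμpos hμub hγ hdec hlb kl ku h1 hku
end
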